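/- Let Ω₀ ⊂ ℝ² be a nonempty closed set with signed distance function φ. Then Ω₀ is convex if and only if for every c ∈ ℝ the sublevel set {x : φ(x) ≤ c} is convex. -/
import Mathlib


open Classical in
noncomputable def sdf (Ω : Set (EuclideanSpace ℝ (Fin 2))) (x : EuclideanSpace ℝ (Fin 2)) : ℝ :=
  if x ∈ Ω then -(Metric.infDist x (frontier Ω)) else Metric.infDist x (frontier Ω)

open Metric Set

/-- A preconnected set meeting both a set and its complement meets its frontier. -/
lemma preconn_inter_frontier {α : Type*} [TopologicalSpace α] {s t : Set α}
    (hs : IsPreconnected s) (h1 : (s ∩ t).Nonempty) (h2 : (s \ t).Nonempty) :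
    (s ∩ frontier t).Nonempty := by
  by_contra h
  rw [Set.not_nonempty_iff_eq_empty] at h
  have hsub : s ⊆ interior t ∪ (closure t)ᶜ := by
    intro x hx
    have hxf : x ∉ frontier t := fun hf => by
      have : x ∈ s ∩ frontier t := ⟨hx, hf⟩
      simp [h] at this
    by_cases hc : x ∈ closure t
    · left
      by_contra hi
      exact hxf ⟨hc, hi⟩
    · right; exact hc
  obtain ⟨x₁, hx₁s, hx₁t⟩ := h1
  obtain ⟨x₂, hx₂s, hx₂t⟩ := h2
  have hx₁ : x₁ ∈ interior t := by
    rcases hsub hx₁s with h' | h'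
    · exact h'
    · exact absurd (subset_closure hx₁t) h'
  have hx₂ : x₂ ∈ (closure t)ᶜ := by
    rcases hsub hx₂s with h' | h'
    · exact absurd (interior_subset h') hx₂t
    · exact h'
  obtain ⟨z, hz⟩ := hs (interior t) (closure t)ᶜ isOpen_interior (isClosed_closure.isOpen_compl)
    hsub ⟨x₁, hx₁s, hx₁⟩ ⟨x₂, hx₂s, hx₂⟩
  exact hz.2.2 (subset_closure (interior_subset hz.2.1))

variable {E : Type*}

/-- Points of a segment are within distance `dist x y` of `x`. -/
lemma dist_le_of_mem_segment {x y z : EuclideanSpace ℝ (Fin 2)}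
    (hz : z ∈ segment ℝ x y) : dist x z ≤ dist x y := by
  have : segment ℝ x y ⊆ closedBall x (dist x y) := by
    apply (convex_closedBall x (dist x y)).segment_subset
    · simpa using dist_nonneg
    · simp [mem_closedBall, dist_comm]
  have := this hz
  rw [mem_closedBall, dist_comm] at this
  exact this

theorem stmt_2 (Ω₀ : Set (EuclideanSpace ℝ (Fin 2)))
    (hne : Ω₀.Nonempty) (hcl : IsClosed Ω₀) :
    Convex ℝ Ω₀ ↔ ∀ c : ℝ, Convex ℝ {x | sdf Ω₀ x ≤ c} := by
  classical
  -- Membership characterization: x ∈ Ω₀ ↔ sdf Ω₀ x ≤ 0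
  have hfr_sub : frontier Ω₀ ⊆ Ω₀ := hcl.frontier_subset
  have memIff : ∀ x, x ∈ Ω₀ ↔ sdf Ω₀ x ≤ 0 := by
    intro x
    constructor
    · intro hx
      simp only [sdf, if_pos hx]
      linarith [infDist_nonneg (x := x) (s := frontier Ω₀)]
    · intro hx
      by_contra hxn
      simp only [sdf, if_neg hxn] at hx
      by_cases hu : Ω₀ = univ
      · exact hxn (hu ▸ mem_univ x)
      · have hfne : (frontier Ω₀).Nonempty := nonempty_frontier_iff.mpr ⟨hne, hu⟩
        have hxfr : x ∉ frontier Ω₀ := fun hf => hxn (hfr_sub hf)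
        have := (isClosed_frontier.notMem_iff_infDist_pos hfne).mp hxfr
        linarith
  constructor
  · -- forward direction
    intro hconv c
    by_cases hu : Ω₀ = univ
    · subst hu
      have : ∀ x : EuclideanSpace ℝ (Fin 2), sdf univ x = 0 := by
        intro x; simp [sdf, frontier_univ]
      simp only [this]
      by_cases hc : (0 : ℝ) ≤ c
      · convert convex_univ (𝕜 := ℝ) using 1
        ext x; simp [hc]
      · convert convex_empty (𝕜 := ℝ) using 1
        ext x; simp [hc]
    have hfne : (frontier Ω₀).Nonempty := nonempty_frontier_iff.mpr ⟨hne, hu⟩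
    by_cases hc : 0 ≤ c
    · -- sublevel set = cthickening c Ω₀
      have key : {x | sdf Ω₀ x ≤ c} = cthickening c Ω₀ := by
        ext x
        simp only [mem_setOf_eq, mem_cthickening_iff]
        rw [ENNReal.le_ofReal_iff_toReal_le (infEdist_ne_top hne) hc]
        change _ ↔ infDist x Ω₀ ≤ c
        by_cases hx : x ∈ Ω₀
        · simp only [sdf, if_pos hx, infDist_zero_of_mem hx]
          constructor
          · intro _; exact hc
          · intro _; linarith [infDist_nonneg (x := x) (s := frontier Ω₀)]
        · simp only [sdf, if_neg hx]
          -- infDist x (frontier Ω₀) = infDist x Ω₀ for x ∉ Ω₀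
          have heq : infDist x (frontier Ω₀) = infDist x Ω₀ := by
            apply le_antisymm
            · obtain ⟨y, hy, hyd⟩ := hcl.exists_infDist_eq_dist hne x
              obtain ⟨z, hzseg, hzfr⟩ := preconn_inter_frontier
                ((convex_segment x y).isPreconnected)
                ⟨y, right_mem_segment _ _ _, hy⟩
                ⟨x, left_mem_segment _ _ _, hx⟩
              calc infDist x (frontier Ω₀) ≤ dist x z := infDist_le_dist_of_mem hzfr
                _ ≤ dist x y := dist_le_of_mem_segment hzseg
                _ = infDist x Ω₀ := hyd.symm
            · exact infDist_le_infDist_of_subset hfr_sub hfne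
          rw [heq]
      rw [key]
      exact hconv.cthickening c
    · -- c < 0 : sublevel set is an intersection of translates of Ω₀
      push_neg at hc
      set ε : ℝ := -c with hε
      have hεpos : 0 < ε := by simp [hε]; linarith
      have key : {x | sdf Ω₀ x ≤ c} =
          ⋂ v ∈ ball (0 : EuclideanSpace ℝ (Fin 2)) ε, (fun y => y + v) ⁻¹' Ω₀ := by
        ext x
        simp only [mem_setOf_eq, mem_iInter, mem_preimage, mem_ball]
        constructor
        · intro hx v hv
          -- sdf x ≤ c < 0 forces x ∈ Ω₀ and infDist x frontier ≥ ε
          have hxΩ : x ∈ Ω₀ := by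
            by_contra hxn
            simp only [sdf, if_neg hxn] at hx
            linarith [infDist_nonneg (x := x) (s := frontier Ω₀)]
          simp only [sdf, if_pos hxΩ] at hx
          have hd : ε ≤ infDist x (frontier Ω₀) := by linarith
          by_contra hyn
          -- segment from x to x+v meets frontier
          obtain ⟨z, hzseg, hzfr⟩ := preconn_inter_frontier
            ((convex_segment x (x + v)).isPreconnected)
            ⟨x, left_mem_segment _ _ _, hxΩ⟩
            ⟨x + v, right_mem_segment _ _ _, hyn⟩
          have h1 : dist x z ≤ dist x (x + v) := dist_le_of_mem_segment hzseg
          have h2 : dist x (x + v) < ε := by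
            rw [dist_comm]
            simpa [dist_eq_norm] using hv
          have h3 : infDist x (frontier Ω₀) ≤ dist x z := infDist_le_dist_of_mem hzfr
          linarith
        · intro hball
          have hxΩ : x ∈ Ω₀ := by
            have := hball 0 (by simpa using hεpos)
            simpa using this
          simp only [sdf, if_pos hxΩ]
          -- need infDist x (frontier Ω₀) ≥ ε
          have hd : ε ≤ infDist x (frontier Ω₀) := by
            by_contra hlt
            push_neg at hlt
            obtain ⟨z, hzfr, hzd⟩ := (infDist_lt_iff hfne).mp hlt
            -- z ∈ ball x ε ⊆ Ω₀ via translation, and ball x ε is open ⊆ interior Ω₀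
            have hball' : ball x ε ⊆ Ω₀ := by
              intro y hy
              have := hball (y - x) (by
                rw [mem_ball] at hy
                simpa [dist_eq_norm] using hy)
              simpa using this
            have hsub : ball x ε ⊆ interior Ω₀ :=
              interior_maximal hball' isOpen_ball
            have hz_int : z ∈ interior Ω₀ := hsub (by rwa [mem_ball, dist_comm])
            rw [hcl.frontier_eq] at hzfr
            exact hzfr.2 hz_int
          linarith
      rw [key]
      exact convex_iInter₂ fun v _ => hconv.translate_preimage_left v
  · -- reverse direction
    intro h
    have h0 := h 0
    have : Ω₀ = {x | sdf Ω₀ x ≤ 0} := by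
      ext x; exact memIff x
    rw [this]
    exact h0
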